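/- arXiv:1908.11606 — 2 statements merged into one kernel-verified Lean document; each statement's English description precedes it below -/
import Mathlib

section
/- Let w ∈ W^I ⊆ S_n have a valley at j, with λ^w_a = ⋯ = λ^w_j = ↘ and λ^w_{j+1} = ⋯ = λ^w_b = ↗. Set Ĵ = {s_a,…,s_{b−1}} ∖ {s_j}. Then for every x ∈ W_{[a,b−1]}^{Ĵ} (minimal coset representatives in W_{[a,b−1]}/W_{Ĵ}) one has x·w ∈ W^I and ℓ(x·w) = ℓ(x) + ℓ(w). -/
open scoped Classical

noncomputable section

/-- The simple transposition `s_j` of `S_n` (0-indexed: it swaps positions `j` and `j+1`). -/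
def sT (n j : ℕ) : Equiv.Perm (Fin n) :=
  if h : j + 1 < n then Equiv.swap ⟨j, Nat.lt_of_succ_lt h⟩ ⟨j + 1, h⟩ else 1

/-- The Coxeter length of a permutation, as its number of inversions. -/
def invLen {n : ℕ} (w : Equiv.Perm (Fin n)) : ℕ :=
  (Finset.univ.filter fun p : Fin n × Fin n => p.1 < p.2 ∧ w p.2 < w p.1).card

/-- The parabolic subgroup `W_I ≅ S_i × S_{n-i}` generated by all simple transpositions
except the `i`-th one (1-indexed: we exclude `s_i`, i.e. the 0-indexed `sT n (i-1)`). -/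
def WIsub (n i : ℕ) : Subgroup (Equiv.Perm (Fin n)) :=
  Subgroup.closure {g | ∃ m : ℕ, m + 1 < n ∧ m + 1 ≠ i ∧ g = sT n m}

/-- `W^I`: the minimal length representatives of the cosets `w W_I`. -/
def minRep (n i : ℕ) : Set (Equiv.Perm (Fin n)) :=
  {w | ∀ m : ℕ, m + 1 < n → m + 1 ≠ i → invLen w < invLen (w * sT n m)}

/-- The path `λ^w = w · (↘,…,↘,↗,…,↗)` associated to `w`; `true` encodes `↘`,
`false` encodes `↗`; the symmetric group permutes positions. -/
def toPath {n : ℕ} (i : ℕ) (w : Equiv.Perm (Fin n)) : Fin n → Bool :=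
  fun k => decide (((w⁻¹ k : Fin n) : ℕ) < i)

/-- `Λ_{n,i}`: the set of `n`-tuples of `↗`/`↘` with exactly `i` entries `↘`. -/
def pathSet (n i : ℕ) : Set (Fin n → Bool) :=
  {lam | (Finset.univ.filter fun k => lam k = true).card = i}

/-- The height of the lattice path of `λ` at horizontal coordinate `j`
(the path starts at `(0,i)`; `↘` is a down-step, `↗` an up-step). -/
def hgt {n : ℕ} (i : ℕ) (lam : Fin n → Bool) (j : ℕ) : ℤ :=
  (i : ℤ) + ∑ k ∈ Finset.univ.filter (fun k : Fin n => (k : ℕ) < j),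
      (if lam k then (-1 : ℤ) else 1)

/-- `λ ≤ μ`: the path `λ` lies weakly below the path `μ`. -/
def pathLE {n : ℕ} (i : ℕ) (lam mu : Fin n → Bool) : Prop :=
  ∀ j ≤ n, hgt i lam j ≤ hgt i mu j

/-- Bruhat order on `S_n`: generated by `a < t·a` for transpositions `t`
with strictly increasing length. -/
def bruhatLE {n : ℕ} (u v : Equiv.Perm (Fin n)) : Prop :=
  Relation.ReflTransGen
    (fun a b => (∃ x y : Fin n, x ≠ y ∧ b = Equiv.swap x y * a) ∧ invLen a < invLen b) u v

/-- A Dyck strip of height `h`: the set of boxes (recorded by their centers) centered at the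
integral points of a Dyck path from `(x₀,h)` to `(x₀+2l,h)` staying weakly below height `h`. -/
def IsDyckStrip (D : Finset (ℤ × ℤ)) (h : ℤ) : Prop :=
  ∃ (x₀ : ℤ) (l : ℕ) (d : ℕ → ℤ),
    d 0 = 0 ∧ d (2 * l) = 0 ∧
    (∀ k < 2 * l, d (k + 1) = d k + 1 ∨ d (k + 1) = d k - 1) ∧
    (∀ k ≤ 2 * l, d k ≤ 0) ∧
    D = (Finset.range (2 * l + 1)).image fun k : ℕ => (x₀ + (k : ℤ), h + d k)

/-- The region `A(λ,μ)` between two paths `λ ≤ μ`, as the set of centers of the boxes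
lying strictly between the two lattice paths. -/
def region {n : ℕ} (i : ℕ) (lam mu : Fin n → Bool) : Set (ℤ × ℤ) :=
  {b | 0 ≤ b.1 ∧ b.1 ≤ (n : ℤ) ∧ Odd (b.1 + b.2 + (i : ℤ)) ∧
    hgt i lam b.1.toNat < b.2 ∧ b.2 < hgt i mu b.1.toNat}

/-- A Dyck partition of a region `A`: a partition of the boxes of `A` into Dyck strips. -/
def IsDyckPartition (P : Finset (Finset (ℤ × ℤ))) (A : Set (ℤ × ℤ)) : Prop :=
  (∀ D ∈ P, ∃ h, IsDyckStrip D h) ∧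
  (∀ D ∈ P, ∀ D' ∈ P, D ≠ D' → Disjoint D D') ∧
  (⋃ D ∈ P, (D : Set (ℤ × ℤ))) = A

/-- Type 1 condition: if some strip `D'` contains a box just above a box of `D`, then every box
just above a box of `D` is in `D'`. -/
def IsType1 (P : Finset (Finset (ℤ × ℤ))) : Prop :=
  ∀ D ∈ P, ∀ D' ∈ P, D ≠ D' → (∃ b ∈ D, (b.1, b.2 + 2) ∈ D') →
    ∀ b ∈ D, (b.1, b.2 + 2) ∈ D'

/-- The boxes just below, SW and SE of a box `b`. -/
def belowBoxes (b : ℤ × ℤ) : Finset (ℤ × ℤ) :=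
  {(b.1, b.2 - 2), (b.1 - 1, b.2 - 1), (b.1 + 1, b.2 - 1)}

/-- Type 2 condition: if some strip `D'` contains a box just below, SW or SE of a box of `D`,
then every box just below, SW or SE of a box of `D` belongs to `D` or `D'`. -/
def IsType2 (P : Finset (Finset (ℤ × ℤ))) : Prop :=
  ∀ D ∈ P, ∀ D' ∈ P, D ≠ D' → (∃ b ∈ D, ∃ c ∈ belowBoxes b, c ∈ D') →
    ∀ b ∈ D, ∀ c ∈ belowBoxes b, c ∈ D ∨ c ∈ D'

/-- `Conf¹(λ,μ)`: the set of type-1 Dyck partitions of the region `A(λ,μ)`. -/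
def Conf1 {n : ℕ} (i : ℕ) (lam mu : Fin n → Bool) : Set (Finset (Finset (ℤ × ℤ))) :=
  {P | IsDyckPartition P (region i lam mu) ∧ IsType1 P}

/-- `Conf²(λ,μ)`: the set of type-2 Dyck partitions of the region `A(λ,μ)`. -/
def Conf2 {n : ℕ} (i : ℕ) (lam mu : Fin n → Bool) : Set (Finset (Finset (ℤ × ℤ))) :=
  {P | IsDyckPartition P (region i lam mu) ∧ IsType2 P}

/-- The height of a Dyck strip (the largest `y`-coordinate of one of its boxes). -/
def stripHeight (D : Finset (ℤ × ℤ)) : ℤ := WithBot.unbotD 0 ((D.image Prod.snd).max)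

/-- Two Dyck strips are distant if no box of one is just above or just below a box of the other. -/
def Distant (D C : Finset (ℤ × ℤ)) : Prop :=
  ∀ b ∈ D, (b.1, b.2 + 2) ∉ C ∧ (b.1, b.2 - 2) ∉ C

/-- The order relation `P ≻ Q` on Dyck partitions. -/
def DPsucc (P Q : Finset (Finset (ℤ × ℤ))) : Prop :=
  ∃ h : ℤ, 0 < h ∧
    (∀ j : ℤ, h < j →
      P.filter (fun D => stripHeight D = j) = Q.filter (fun D => stripHeight D = j)) ∧
    P.filter (fun D => stripHeight D = h) ≠ Q.filter (fun D => stripHeight D = h) ∧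
    (∀ D ∈ P.filter (fun D => stripHeight D = h),
      ∃ D' ∈ Q.filter (fun D => stripHeight D = h), D ⊆ D')

/-!
Minimality of `x` modulo `W_Ĵ` says that `x` has ascents at every `m ∈ [a, b-1]` other than `j`,
so `x` is increasing on the blocks `[a, j]` and `[j+1, b]`; since `x` also fixes every point
outside `[a, b]`, each inversion `(c, d)` of `x` has `c` in the `↘`-block and `d` in the
`↗`-block, i.e. `w⁻¹ c < i ≤ w⁻¹ d`. Hence the inversions of `xw` are exactly those of `w`
together with the `w⁻¹`-translates of those of `x`, and a descent of `xw` can only sit at `i`.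
-/

section

variable {n : ℕ}

def inversions (w : Equiv.Perm (Fin n)) : Finset (Fin n × Fin n) :=
  Finset.univ.filter fun p : Fin n × Fin n => p.1 < p.2 ∧ w p.2 < w p.1

theorem invLen_eq_card_inversions (w : Equiv.Perm (Fin n)) :
    invLen w = (inversions w).card := rfl

@[simp]
theorem mem_inversions {w : Equiv.Perm (Fin n)} {p : Fin n × Fin n} :
    p ∈ inversions w ↔ p.1 < p.2 ∧ w p.2 < w p.1 := by
  simp [inversions]

theorem inversions_mul {x w : Equiv.Perm (Fin n)}
    (h : ∀ c d, c < d → x d < x c → w⁻¹ c < w⁻¹ d) :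
    inversions (x * w) =
      inversions w ∪ (inversions x).map (Equiv.prodCongr w⁻¹ w⁻¹).toEmbedding := by
  ext ⟨p, q⟩
  simp only [mem_inversions, Finset.mem_union, Finset.mem_map_equiv, Equiv.prodCongr_symm,
    Equiv.prodCongr_apply, Prod.map, Equiv.Perm.inv_def, Equiv.symm_symm, Equiv.Perm.mul_apply]
  have hp : w⁻¹ (w p) = p := by simp
  have hq : w⁻¹ (w q) = q := by simp
  have h₁ := h (w p) (w q)
  have h₂ := h (w q) (w p)
  rw [hp, hq] at h₁ h₂
  rcases lt_trichotomy (w p) (w q) with hlt | heq | hgt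
  · constructor
    · exact fun hinv => Or.inr ⟨hlt, hinv.2⟩
    · rintro (⟨_, hgt⟩ | ⟨_, hinv⟩)
      · exact absurd hlt hgt.not_gt
      · exact ⟨h₁ hlt hinv, hinv⟩
  · obtain rfl := w.injective heq
    simp
  · constructor
    · exact fun hinv => Or.inl ⟨hinv.1, hgt⟩
    · rintro (⟨hpq, _⟩ | ⟨hlt, _⟩)
      · refine ⟨hpq, lt_of_le_of_ne (not_lt.1 fun hx => ?_) ?_⟩
        · exact hpq.not_gt (h₂ hgt hx)
        · exact fun he => hpq.ne (w.injective (x.injective he)).symm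
      · exact absurd hlt hgt.not_gt

theorem invLen_mul_eq_add {x w : Equiv.Perm (Fin n)}
    (h : ∀ c d, c < d → x d < x c → w⁻¹ c < w⁻¹ d) :
    invLen (x * w) = invLen x + invLen w := by
  have hdisj : Disjoint (inversions w)
      ((inversions x).map (Equiv.prodCongr w⁻¹ w⁻¹).toEmbedding) := by
    refine Finset.disjoint_left.2 fun ⟨p, q⟩ hw hx => ?_
    simp only [mem_inversions, Finset.mem_map_equiv, Equiv.prodCongr_symm,
      Equiv.prodCongr_apply, Prod.map, Equiv.Perm.inv_def, Equiv.symm_symm] at hw hx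
    exact hw.2.not_gt hx.1
  rw [invLen_eq_card_inversions, inversions_mul h, Finset.card_union_of_disjoint hdisj,
    Finset.card_map, add_comm]
  rfl

theorem sT_apply_lt_sT_apply {m : ℕ} (hm : m + 1 < n) {c d : Fin n} (hcd : c < d)
    (hne : (c, d) ≠ (⟨m, Nat.lt_of_succ_lt hm⟩, ⟨m + 1, hm⟩)) : sT n m c < sT n m d := by
  simp only [sT, dif_pos hm, Equiv.swap_apply_def, Ne, Prod.mk.injEq, Fin.ext_iff] at hne ⊢
  rw [Fin.lt_def] at hcd
  split_ifs <;> simp only [Fin.lt_def] at * <;> omega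

theorem invLen_sT {m : ℕ} (hm : m + 1 < n) : invLen (sT n m) = 1 := by
  rw [invLen_eq_card_inversions, Finset.card_eq_one]
  refine ⟨(⟨m, Nat.lt_of_succ_lt hm⟩, ⟨m + 1, hm⟩), Finset.ext fun ⟨c, d⟩ => ?_⟩
  rw [mem_inversions, Finset.mem_singleton]
  refine ⟨fun ⟨hcd, hinv⟩ => not_imp_comm.1 (sT_apply_lt_sT_apply hm hcd) hinv.not_gt, ?_⟩
  rintro ⟨⟩
  simp [sT, dif_pos hm, Fin.lt_def]

theorem invLen_mul_sT_of_lt {w : Equiv.Perm (Fin n)} {m : ℕ} (hm : m + 1 < n)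
    (hasc : w ⟨m, Nat.lt_of_succ_lt hm⟩ < w ⟨m + 1, hm⟩) :
    invLen (w * sT n m) = invLen w + 1 := by
  rw [invLen_mul_eq_add, invLen_sT hm]
  intro c d hcd hinv
  have hsT : (sT n m)⁻¹ = sT n m := by simp [sT, dif_pos hm, Equiv.swap_inv]
  rw [hsT]
  refine sT_apply_lt_sT_apply hm hcd ?_
  rw [Ne, Prod.mk.injEq]
  rintro ⟨rfl, rfl⟩
  exact hasc.not_gt hinv

theorem invLen_lt_invLen_mul_sT_iff {w : Equiv.Perm (Fin n)} {m : ℕ} (hm : m + 1 < n) :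
    invLen w < invLen (w * sT n m) ↔ w ⟨m, Nat.lt_of_succ_lt hm⟩ < w ⟨m + 1, hm⟩ := by
  refine ⟨fun hlt => ?_, fun hasc => by rw [invLen_mul_sT_of_lt hm hasc]; omega⟩
  by_contra hge
  have hdesc : (w * sT n m) ⟨m, Nat.lt_of_succ_lt hm⟩ < (w * sT n m) ⟨m + 1, hm⟩ := by
    have hne : w ⟨m + 1, hm⟩ ≠ w ⟨m, Nat.lt_of_succ_lt hm⟩ :=
      w.injective.ne (by simp [Fin.ext_iff])
    simpa [sT, dif_pos hm] using lt_of_le_of_ne (not_lt.1 hge) hne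
  have := invLen_mul_sT_of_lt hm hdesc
  rw [mul_assoc, show sT n m * sT n m = 1 by simp [sT, dif_pos hm], mul_one] at this
  omega

theorem mem_minRep_iff {i : ℕ} {w : Equiv.Perm (Fin n)} :
    w ∈ minRep n i ↔
      ∀ m (hm : m + 1 < n), m + 1 ≠ i → w ⟨m, Nat.lt_of_succ_lt hm⟩ < w ⟨m + 1, hm⟩ :=
  forall_congr' fun _ => forall_congr' fun hm => imp_congr_right fun _ =>
    invLen_lt_invLen_mul_sT_iff hm

theorem mul_mem_minRep {i : ℕ} {x w : Equiv.Perm (Fin n)} (hw : w ∈ minRep n i)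
    (h : ∀ c d, c < d → x d < x c → (w⁻¹ c : ℕ) < i ∧ i ≤ (w⁻¹ d : ℕ)) :
    x * w ∈ minRep n i := by
  rw [mem_minRep_iff] at hw ⊢
  intro m hm hmi
  refine lt_of_le_of_ne (not_lt.1 fun hdesc => hmi ?_) ?_
  · have := h _ _ (hw m hm hmi) hdesc
    simp only [Equiv.Perm.coe_inv, Equiv.symm_apply_apply] at this
    omega
  · exact (x * w).injective.ne (by simp [Fin.ext_iff])

theorem Fin.strictMonoOn_of_lt_add_one {α : Type*} [Preorder α] {f : Fin n → α}
    {lo hi : ℕ} (hf : ∀ m (hm : m + 1 < n), lo ≤ m → m < hi →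
      f ⟨m, Nat.lt_of_succ_lt hm⟩ < f ⟨m + 1, hm⟩) :
    StrictMonoOn f {k | lo ≤ (k : ℕ) ∧ (k : ℕ) ≤ hi} := by
  rintro ⟨c, hc⟩ ⟨hlo, -⟩ ⟨d, hd⟩ ⟨-, hhi⟩ hcd
  simp only [Fin.lt_def] at hcd hlo hhi
  induction d, hcd using Nat.le_induction with
  | base => exact hf c hd hlo (by omega)
  | succ d hcd ih => exact (ih (by omega) (by omega)).trans (hf d hd (by omega) (by omega))

theorem apply_eq_self_of_mem_closure_sT {a b : ℕ} {g : Equiv.Perm (Fin n)}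
    (hg : g ∈ Subgroup.closure {g | ∃ m : ℕ, a ≤ m ∧ m < b ∧ g = sT n m})
    {k : Fin n} (hk : (k : ℕ) < a ∨ b < k) : g k = k := by
  suffices hle : Subgroup.closure {g | ∃ m : ℕ, a ≤ m ∧ m < b ∧ g = sT n m} ≤
      fixingSubgroup (Equiv.Perm (Fin n)) {k : Fin n | (k : ℕ) < a ∨ b < k} from
    (mem_fixingSubgroup_iff _).1 (hle hg) k hk
  rw [Subgroup.closure_le]
  rintro _ ⟨m, ham, hmb, rfl⟩
  rw [SetLike.mem_coe, mem_fixingSubgroup_iff]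
  rintro y (hy : (y : ℕ) < a ∨ b < y)
  unfold sT
  split_ifs
  · exact Equiv.swap_apply_of_ne_of_ne (by simp [Fin.ext_iff]; omega)
      (by simp [Fin.ext_iff]; omega)
  · rfl

theorem le_and_le_of_inversion_of_apply_eq_self {a b : ℕ} {x : Equiv.Perm (Fin n)}
    (hfix : ∀ k : Fin n, (k : ℕ) < a ∨ b < k → x k = k) {c d : Fin n} (hcd : c < d)
    (hinv : x d < x c) : a ≤ (c : ℕ) ∧ (d : ℕ) ≤ b := by
  have hmem : ∀ k : Fin n, ((x k : ℕ) < a ∨ b < x k) → (k : ℕ) < a ∨ b < k := by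
    intro k hk
    rwa [← x.injective (hfix _ hk)]
  rw [Fin.lt_def] at hcd hinv
  constructor
  · by_contra hca
    have hc := hfix c (by omega)
    have hd := hfix d (hmem d (by omega))
    omega
  · by_contra hdb
    have hd := hfix d (by omega)
    have hc := hfix c (hmem c (by omega))
    omega

theorem inversion_straddles_of_mem_closure_sT {a j b : ℕ} (hab : a ≤ j) (hjb : j < b)
    {x : Equiv.Perm (Fin n)}
    (hx : x ∈ Subgroup.closure {g | ∃ m : ℕ, a ≤ m ∧ m < b ∧ g = sT n m})
    (hxmin : ∀ m : ℕ, a ≤ m → m < b → m ≠ j → invLen x < invLen (x * sT n m))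
    {c d : Fin n} (hcd : c < d) (hinv : x d < x c) :
    a ≤ (c : ℕ) ∧ (c : ℕ) ≤ j ∧ j < (d : ℕ) ∧ (d : ℕ) ≤ b := by
  obtain ⟨hac, hdb⟩ := le_and_le_of_inversion_of_apply_eq_self
    (fun _ hk => apply_eq_self_of_mem_closure_sT hx hk) hcd hinv
  have hasc : ∀ m (hm : m + 1 < n), a ≤ m → m < b → m ≠ j →
      x ⟨m, Nat.lt_of_succ_lt hm⟩ < x ⟨m + 1, hm⟩ := fun m hm ham hmb hmj =>
    (invLen_lt_invLen_mul_sT_iff hm).1 (hxmin m ham hmb hmj)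
  have hlow : StrictMonoOn x {k | a ≤ (k : ℕ) ∧ (k : ℕ) ≤ j} :=
    Fin.strictMonoOn_of_lt_add_one fun m hm ham hmj =>
      hasc m hm ham (by omega) hmj.ne
  have hhigh : StrictMonoOn x {k | j + 1 ≤ (k : ℕ) ∧ (k : ℕ) ≤ b} :=
    Fin.strictMonoOn_of_lt_add_one fun m hm hjm hmb =>
      hasc m hm (by omega) hmb (by omega)
  rw [Fin.lt_def] at hcd
  refine ⟨hac, ?_, ?_, hdb⟩
  · by_contra hcj
    exact hinv.not_gt (hhigh ⟨by omega, by omega⟩ ⟨by omega, hdb⟩ hcd)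
  · by_contra hdj
    exact hinv.not_gt (hlow ⟨hac, by omega⟩ ⟨by omega, by omega⟩ hcd)

end

theorem valley_stack_general (n i : ℕ)
    (w : Equiv.Perm (Fin n)) (hw : w ∈ minRep n i)
    (a j b : ℕ) (hab : a ≤ j) (hjb : j < b)
    (hdown : ∀ k (hk : k < n), a ≤ k → k ≤ j → toPath i w ⟨k, hk⟩ = true)
    (hup : ∀ k (hk : k < n), j + 1 ≤ k → k ≤ b → toPath i w ⟨k, hk⟩ = false)
    (x : Equiv.Perm (Fin n))
    (hx : x ∈ Subgroup.closure {g | ∃ m : ℕ, a ≤ m ∧ m < b ∧ g = sT n m})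
    (hxmin : ∀ m : ℕ, a ≤ m → m < b → m ≠ j → invLen x < invLen (x * sT n m)) :
    x * w ∈ minRep n i ∧ invLen (x * w) = invLen x + invLen w := by
  have hstraddle : ∀ c d, c < d → x d < x c → (w⁻¹ c : ℕ) < i ∧ i ≤ (w⁻¹ d : ℕ) := by
    intro c d hcd hinv
    obtain ⟨hac, hcj, hjd, hdb⟩ :=
      inversion_straddles_of_mem_closure_sT hab hjb hx hxmin hcd hinv
    have hc := hdown c c.isLt hac hcj
    have hd := hup d d.isLt hjd hdb
    simp only [toPath, Fin.eta, decide_eq_true_eq, decide_eq_false_iff_not, not_lt] at hc hd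
    exact ⟨hc, hd⟩
  refine ⟨mul_mem_minRep hw hstraddle, invLen_mul_eq_add fun c d hcd hinv => ?_⟩
  obtain ⟨hc, hd⟩ := hstraddle c d hcd hinv
  exact Fin.lt_def.2 (hc.trans_le hd)

/-- with a valley at `j` as above and `Ĵ = [a,b-1] ∖ {j}`, for every minimal
coset representative `x ∈ W_{[a,b-1]}^{Ĵ}` one has `x·w ∈ W^I` and `ℓ(xw) = ℓ(x) + ℓ(w)`. -/
theorem valley_stack (n i : ℕ) (hi1 : 1 ≤ i) (hi2 : i < n)
    (w : Equiv.Perm (Fin n)) (hw : w ∈ minRep n i)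
    (a j b : ℕ) (hab : a ≤ j) (hjb : j < b) (hbn : b < n)
    (hdown : ∀ k (hk : k < n), a ≤ k → k ≤ j → toPath i w ⟨k, hk⟩ = true)
    (hup : ∀ k (hk : k < n), j + 1 ≤ k → k ≤ b → toPath i w ⟨k, hk⟩ = false)
    (x : Equiv.Perm (Fin n))
    (hx : x ∈ Subgroup.closure {g | ∃ m : ℕ, a ≤ m ∧ m < b ∧ g = sT n m})
    (hxmin : ∀ m : ℕ, a ≤ m → m < b → m ≠ j → invLen x < invLen (x * sT n m)) :
    x * w ∈ minRep n i ∧ invLen (x * w) = invLen x + invLen w :=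
  valley_stack_general n i w hw a j b hab hjb hdown hup x hx hxmin

end
end

section
/- If the Young tableau/partition shape corresponding to a path μ ∈ Λ_{n,i} has at most 2 rows, then every type-1 Dyck partition P ∈ Conf¹(λ,μ) (for any λ ≤ μ) contains at most one Dyck strip of length greater than 1, and consequently there exist no P, Q ∈ Conf¹(λ,μ) with P ≻ Q and |P| = |Q|. -/
open scoped Classical

noncomputable section

/-! Write `δ(x, y) = y - x + i` for a box `(x, y)`. Every path of `Λ_{n,i}` has height at least
`|x - i|` at `x`, and if the tableau of `μ` has at most two rows then `μ` has height at most
`max (i - x) (x - i + 4)`; by parity every box of `A(λ, μ)` lies on one of the two diagonals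
`δ = 1`, `δ = 3`. A Dyck strip inside two adjacent diagonals is a single box or the three boxes
`(a, h), (a + 1, h - 1), (a + 2, h)` with `δ(a, h) = 3`. In a type-1 partition the box above the
middle one is outside the region, since type 1 would otherwise put the box above `(a, h)`, on
`δ = 5`, into the region. So `μ` has height `≥ a - i + 4` at `a` and `≤ a - i + 4` at `a + 1`, and
as `hgt μ x - x` is antitone this determines `a`: all partitions in `Conf¹(λ, μ)` share their long
strip, if any. Counting boxes, `|P|` decides whether `P` contains it, and the rest of `P` are
singletons; so `|P| = |Q|` forces `P = Q`, which is incompatible with `P ≻ Q`.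
-/

open Finset

section Paths

variable {n i : ℕ} {ν : Fin n → Bool} {x : ℕ}

def downCount (ν : Fin n → Bool) (x : ℕ) : ℕ := #{k : Fin n | (k : ℕ) < x ∧ ν k = true}

def rowCount (ν : Fin n → Bool) : ℕ :=
  #{k : Fin n | ν k = true ∧ ∃ k' : Fin n, k' < k ∧ ν k' = false}

lemma downCount_mono (ν : Fin n → Bool) : Monotone (downCount ν) :=
  fun _ _ hxy => card_le_card <| monotone_filter_right _ fun _ _ h => ⟨h.1.trans_le hxy, h.2⟩

lemma downCount_le (ν : Fin n → Bool) (hx : x ≤ n) : downCount ν x ≤ x := by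
  calc downCount ν x ≤ #{k : Fin n | (k : ℕ) < x} :=
        card_le_card <| monotone_filter_right _ fun _ _ h => h.1
    _ = x := by rw [Fin.card_filter_val_lt, min_eq_right hx]

lemma downCount_le_of_mem_pathSet (hν : ν ∈ pathSet n i) (x : ℕ) : downCount ν x ≤ i :=
  hν ▸ card_le_card (monotone_filter_right _ fun _ _ h => h.2)

lemma hgt_eq (ν : Fin n → Bool) (hx : x ≤ n) : hgt i ν x = i + x - 2 * downCount ν x := by
  have hsplit := card_filter_add_card_filter_not (s := {k : Fin n | (k : ℕ) < x})
    (p := fun k => ν k = true)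
  rw [filter_filter, filter_filter, Fin.card_filter_val_lt, min_eq_right hx] at hsplit
  rw [hgt, sum_ite, sum_const, sum_const, filter_filter, filter_filter, downCount]
  simp only [nsmul_eq_mul, mul_neg, mul_one]
  omega

lemma downCount_eq_or_le_rowCount_add (hν : ν ∈ pathSet n i) (hx : x ≤ n) :
    downCount ν x = x ∨ i ≤ rowCount ν + downCount ν x := by
  by_cases hup : ∃ k₀ : Fin n, (k₀ : ℕ) < x ∧ ν k₀ = false
  · obtain ⟨k₀, hk₀x, hk₀⟩ := hup
    right
    calc i = #{k : Fin n | ν k = true} := hν.symm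
      _ ≤ rowCount ν + downCount ν x := by
        refine (card_le_card fun k hk => ?_).trans (card_union_le _ _)
        simp only [mem_filter, mem_univ, true_and, mem_union] at hk ⊢
        by_cases hkx : (k : ℕ) < x
        · exact .inr ⟨hkx, hk⟩
        · exact .inl ⟨hk, k₀, Fin.lt_def.mpr (by omega), hk₀⟩
  · left
    push Not at hup
    refine le_antisymm (downCount_le ν hx) ?_
    calc x = #{k : Fin n | (k : ℕ) < x} := by rw [Fin.card_filter_val_lt, min_eq_right hx]
      _ ≤ downCount ν x := card_le_card <| monotone_filter_right _ fun k _ hk =>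
          ⟨hk, by simpa using hup k hk⟩

lemma sub_le_hgt (hν : ν ∈ pathSet n i) (hx : x ≤ n) :
    (i : ℤ) - x ≤ hgt i ν x ∧ (x : ℤ) - i ≤ hgt i ν x := by
  have := downCount_le ν hx
  have := downCount_le_of_mem_pathSet hν x
  rw [hgt_eq ν hx]
  omega

lemma hgt_le_of_rowCount_le (hν : ν ∈ pathSet n i) {r : ℕ} (hr : rowCount ν ≤ r)
    (hx : x ≤ n) : hgt i ν x ≤ i - x ∨ hgt i ν x ≤ x - i + 2 * r := by
  rw [hgt_eq ν hx]
  rcases downCount_eq_or_le_rowCount_add hν hx with h | h <;> omega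

lemma hgt_sub_le_hgt_sub (ν : Fin n → Bool) {y : ℕ} (hxy : x ≤ y) (hy : y ≤ n) :
    hgt i ν y - y ≤ hgt i ν x - x := by
  rw [hgt_eq ν hy, hgt_eq ν (hxy.trans hy)]
  have := downCount_mono ν hxy
  omega

end Paths

lemma diag_eq_one_or_three_of_mem_region {n i : ℕ} {lam mu : Fin n → Bool}
    (hmu : mu ∈ pathSet n i) (hrows : rowCount mu ≤ 2) (hlam : lam ∈ pathSet n i)
    {b : ℤ × ℤ} (hb : b ∈ region i lam mu) : b.2 - b.1 + i = 1 ∨ b.2 - b.1 + i = 3 := by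
  obtain ⟨h0, hn, ⟨t, ht⟩, hlo, hhi⟩ := hb
  lift b.1 to ℕ using h0 with x hx
  simp only [Int.toNat_natCast] at hlo hhi
  have hxn : x ≤ n := by omega
  have := sub_le_hgt hlam hxn
  have := hgt_le_of_rowCount_le hmu hrows hxn
  have := hgt_eq (i := i) mu hxn
  omega

def tri (a h : ℤ) : Finset (ℤ × ℤ) := {(a, h), (a + 1, h - 1), (a + 2, h)}

lemma card_tri (a h : ℤ) : #(tri a h) = 3 :=
  card_eq_three.2 ⟨_, _, _, by simp, by simp, by simp, rfl⟩

section DyckStrips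

variable {D : Finset (ℤ × ℤ)} {h : ℤ}

lemma IsDyckStrip.nonempty (hD : IsDyckStrip D h) : D.Nonempty := by
  obtain ⟨x₀, l, d, -, -, -, -, rfl⟩ := hD
  simp

lemma IsDyckStrip.exists_eq_tri {c : ℤ} (hD : IsDyckStrip D h)
    (hdiag : ∀ b ∈ D, b.2 - b.1 = c ∨ b.2 - b.1 = c + 2) (hcard : 1 < #D) :
    ∃ a, D = tri a h ∧ h = a + c + 2 := by
  obtain ⟨x₀, l, d, hd0, hd2l, hstep, hneg, rfl⟩ := hD
  have hdiag' (k : ℕ) (hk : k ≤ 2 * l) :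
      h + d k - (x₀ + k) = c ∨ h + d k - (x₀ + k) = c + 2 :=
    hdiag _ (mem_image_of_mem _ (mem_range.2 (by omega)))
  have hl : 1 ≤ l := by
    by_contra! hl
    obtain rfl : l = 0 := by omega
    simpa using hcard.trans_le card_image_le
  have hd1 : d 1 = -1 := by
    have := hneg 1 (by omega)
    have := hstep 0 (by omega)
    simp only [zero_add] at this
    omega
  have htop : h - x₀ = c + 2 := by
    have h₀ := hdiag' 0 (by omega)
    have h₁ := hdiag' 1 (by omega)
    push_cast at h₀ h₁
    omega
  obtain rfl : l = 1 := by
    by_contra! hl2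
    have h₂ := hdiag' 2 (by omega)
    have h₃ := hdiag' 3 (by omega)
    have := hneg 3 (by omega)
    have := hstep 1 (by omega)
    have := hstep 2 (by omega)
    push_cast at h₂ h₃
    omega
  refine ⟨x₀, ?_, by omega⟩
  rw [show range (2 * 1 + 1) = {0, 1, 2} from rfl]
  simp [tri, hd0, hd1, hd2l, sub_eq_add_neg]

end DyckStrips

namespace IsDyckPartition

variable {P Q : Finset (Finset (ℤ × ℤ))} {A : Set (ℤ × ℤ)}

lemma subset (hP : IsDyckPartition P A) {D : Finset (ℤ × ℤ)} (hD : D ∈ P) :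
    (D : Set (ℤ × ℤ)) ⊆ A :=
  hP.2.2 ▸ Set.subset_biUnion_of_mem (u := fun D : Finset (ℤ × ℤ) => (D : Set (ℤ × ℤ))) hD

lemma exists_mem (hP : IsDyckPartition P A) {b : ℤ × ℤ} (hb : b ∈ A) : ∃ D ∈ P, b ∈ D := by
  rw [← hP.2.2] at hb
  simpa using hb

lemma sum_card_eq (hP : IsDyckPartition P A) (hQ : IsDyckPartition Q A) :
    ∑ D ∈ P, #D = ∑ D ∈ Q, #D := by
  have hcard {R : Finset (Finset (ℤ × ℤ))} (hR : IsDyckPartition R A) :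
      ∑ D ∈ R, #D = #(R.biUnion id) :=
    (card_biUnion fun D hD E hE hne => hR.2.1 D hD E hE hne).symm
  have hU : P.biUnion id = Q.biUnion id := coe_injective (by simp [coe_biUnion, hP.2.2, hQ.2.2])
  rw [hcard hP, hcard hQ, hU]

end IsDyckPartition

lemma IsType1.notMem_above_middle {P : Finset (Finset (ℤ × ℤ))} {A : Set (ℤ × ℤ)}
    (hP1 : IsType1 P) (hP : IsDyckPartition P A) {a h : ℤ} (hT : tri a h ∈ P)
    (htop : (a, h + 2) ∉ A) : (a + 1, h + 1) ∉ A := by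
  intro habove
  obtain ⟨D, hD, hmem⟩ := hP.exists_mem habove
  have hne : tri a h ≠ D := by
    rintro rfl
    simp only [tri, mem_insert, mem_singleton, Prod.ext_iff] at hmem
    omega
  have hall := hP1 _ hT D hD hne ⟨(a + 1, h - 1), by simp [tri], by convert hmem using 2; ring⟩
  exact htop (hP.subset hD (hall (a, h) (by simp [tri])))

lemma not_DPsucc_self (P : Finset (Finset (ℤ × ℤ))) : ¬ DPsucc P P :=
  fun ⟨_, _, _, hne, _⟩ => hne rfl

section TwoRows

variable {n i : ℕ} {lam mu : Fin n → Bool} (hmu : mu ∈ pathSet n i) (hrows : rowCount mu ≤ 2)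
  (hlam : lam ∈ pathSet n i) {P Q : Finset (Finset (ℤ × ℤ))}
include hmu hrows hlam

lemma exists_valley_of_tri_mem (hP : P ∈ Conf1 i lam mu) {a h : ℤ} (hT : tri a h ∈ P) :
    ∃ x : ℕ, (x : ℤ) = a ∧ x < n ∧ h = x - i + 3 ∧
      h + 1 ≤ hgt i mu x ∧ hgt i mu (x + 1) ≤ h + 1 := by
  have hdiag {b : ℤ × ℤ} (hb : b ∈ region i lam mu) :=
    diag_eq_one_or_three_of_mem_region hmu hrows hlam hb
  have hleft := hP.1.subset hT (show (a, h) ∈ tri a h by simp [tri])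
  have hmid := hP.1.subset hT (show (a + 1, h - 1) ∈ tri a h by simp [tri])
  have hdl := hdiag hleft
  have hdm := hdiag hmid
  dsimp only at hdl hdm
  have hnot := hP.2.notMem_above_middle hP.1 hT fun htop => by
    have := hdiag htop
    dsimp only at this
    omega
  obtain ⟨h0, -, -, -, hhi⟩ := hleft
  obtain ⟨-, hn, hodd, hlo, -⟩ := hmid
  lift a to ℕ using h0 with x
  have hx1 : ((x : ℤ) + 1).toNat = x + 1 := by omega
  rw [hx1] at hlo
  rw [Int.toNat_natCast] at hhi
  refine ⟨x, rfl, by omega, by omega, hhi, ?_⟩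
  by_contra! hlt
  refine hnot ⟨by omega, hn, ?_, by rw [hx1]; omega, by rw [hx1]; exact hlt⟩
  convert hodd.add_even even_two using 1
  ring

lemma tri_eq_of_mem_conf1 (hP : P ∈ Conf1 i lam mu) (hQ : Q ∈ Conf1 i lam mu) {a h a' h' : ℤ}
    (hT : tri a h ∈ P) (hT' : tri a' h' ∈ Q) : tri a h = tri a' h' := by
  obtain ⟨x, rfl, hx, rfl, hx_lo, hx_hi⟩ := exists_valley_of_tri_mem hmu hrows hlam hP hT
  obtain ⟨x', rfl, hx', rfl, hx'_lo, hx'_hi⟩ := exists_valley_of_tri_mem hmu hrows hlam hQ hT'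
  have h₁ : ¬ x' + 1 ≤ x := fun hle => by
    have := hgt_sub_le_hgt_sub (i := i) mu hle hx.le
    omega
  have h₂ : ¬ x + 1 ≤ x' := fun hle => by
    have := hgt_sub_le_hgt_sub (i := i) mu hle hx'.le
    omega
  obtain rfl : x = x' := by omega
  rfl

lemma exists_eq_tri_of_one_lt_card (hP : P ∈ Conf1 i lam mu) {D : Finset (ℤ × ℤ)} (hD : D ∈ P)
    (hcard : 1 < #D) : ∃ a h, D = tri a h := by
  obtain ⟨h, hs⟩ := hP.1.1 D hD
  obtain ⟨a, rfl, -⟩ := hs.exists_eq_tri (c := 1 - i) (fun b hb => by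
    have := diag_eq_one_or_three_of_mem_region hmu hrows hlam (hP.1.subset hD hb)
    omega) hcard
  exact ⟨a, h, rfl⟩

lemma eq_of_one_lt_card (hP : P ∈ Conf1 i lam mu) (hQ : Q ∈ Conf1 i lam mu)
    {D E : Finset (ℤ × ℤ)} (hD : D ∈ P) (hE : E ∈ Q) (hDc : 1 < #D) (hEc : 1 < #E) : D = E := by
  obtain ⟨a, h, rfl⟩ := exists_eq_tri_of_one_lt_card hmu hrows hlam hP hD hDc
  obtain ⟨a', h', rfl⟩ := exists_eq_tri_of_one_lt_card hmu hrows hlam hQ hE hEc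
  exact tri_eq_of_mem_conf1 hmu hrows hlam hP hQ hD hE

lemma card_eq_one_or_three (hP : P ∈ Conf1 i lam mu) {D : Finset (ℤ × ℤ)} (hD : D ∈ P) :
    #D = 1 ∨ #D = 3 := by
  by_cases hc : 1 < #D
  · obtain ⟨a, h, rfl⟩ := exists_eq_tri_of_one_lt_card hmu hrows hlam hP hD hc
    exact .inr (card_tri a h)
  · obtain ⟨h, hs⟩ := hP.1.1 D hD
    have := hs.nonempty.card_pos
    omega

lemma sum_card_eq_card_add (hP : P ∈ Conf1 i lam mu) :
    ∑ D ∈ P, #D = #P + 2 * #{D ∈ P | 1 < #D} := by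
  rw [card_eq_sum_ones, card_filter, mul_sum, ← sum_add_distrib]
  refine sum_congr rfl fun D hD => ?_
  rcases card_eq_one_or_three hmu hrows hlam hP hD with h | h <;> simp [h]

lemma mem_of_one_lt_card_of_card_eq (hP : P ∈ Conf1 i lam mu) (hQ : Q ∈ Conf1 i lam mu)
    (hcard : #P = #Q) {D : Finset (ℤ × ℤ)} (hD : D ∈ P) (hDc : 1 < #D) : D ∈ Q := by
  have hsum := hP.1.sum_card_eq hQ.1
  rw [sum_card_eq_card_add hmu hrows hlam hP, sum_card_eq_card_add hmu hrows hlam hQ] at hsum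
  have hlongP : 0 < #{D ∈ P | 1 < #D} := card_pos.2 ⟨D, mem_filter.2 ⟨hD, hDc⟩⟩
  obtain ⟨E, hE⟩ := card_pos.1 (show 0 < #{D ∈ Q | 1 < #D} by omega)
  rw [mem_filter] at hE
  rw [eq_of_one_lt_card hmu hrows hlam hP hQ hD hE.1 hDc hE.2]
  exact hE.1

lemma subset_of_card_eq (hP : P ∈ Conf1 i lam mu) (hQ : Q ∈ Conf1 i lam mu)
    (hcard : #P = #Q) : P ⊆ Q := by
  intro D hD
  rcases card_eq_one_or_three hmu hrows hlam hP hD with hD1 | hD3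
  · obtain ⟨b, rfl⟩ := card_eq_one.1 hD1
    obtain ⟨E, hE, hbE⟩ := hQ.1.exists_mem (hP.1.subset hD (mem_singleton_self b))
    rcases card_eq_one_or_three hmu hrows hlam hQ hE with hE1 | hE3
    · obtain ⟨c, rfl⟩ := card_eq_one.1 hE1
      rwa [← mem_singleton.1 hbE] at hE
    · have hEP := mem_of_one_lt_card_of_card_eq hmu hrows hlam hQ hP hcard.symm hE (by omega)
      have hne : E ≠ {b} := fun h => by simp [h] at hE3
      exact absurd (mem_singleton_self b)
        (disjoint_left.1 (hP.1.2.1 E hEP {b} hD hne) hbE)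
  · exact mem_of_one_lt_card_of_card_eq hmu hrows hlam hP hQ hcard hD (by omega)

lemma eq_of_card_eq (hP : P ∈ Conf1 i lam mu) (hQ : Q ∈ Conf1 i lam mu) (hcard : #P = #Q) :
    P = Q :=
  (subset_of_card_eq hmu hrows hlam hP hQ hcard).antisymm
    (subset_of_card_eq hmu hrows hlam hQ hP hcard.symm)

end TwoRows

theorem two_rows_no_order_general (n i : ℕ)
    (mu : Fin n → Bool) (hmu : mu ∈ pathSet n i)
    (hrows : (Finset.univ.filter fun k : Fin n =>
        mu k = true ∧ ∃ k' : Fin n, k' < k ∧ mu k' = false).card ≤ 2)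
    (lam : Fin n → Bool) (hlam : lam ∈ pathSet n i) :
    (∀ P ∈ Conf1 i lam mu, ∀ D ∈ P, ∀ D' ∈ P, 1 < D.card → 1 < D'.card → D = D') ∧
    ¬ ∃ P Q, P ∈ Conf1 i lam mu ∧ Q ∈ Conf1 i lam mu ∧ DPsucc P Q ∧ P.card = Q.card := by
  refine ⟨fun P hP D hD D' hD' => eq_of_one_lt_card hmu hrows hlam hP hP hD hD', ?_⟩
  rintro ⟨P, Q, hP, hQ, hPQ, hcard⟩
  obtain rfl := eq_of_card_eq hmu hrows hlam hP hQ hcard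
  exact not_DPsucc_self P hPQ

/-- if the tableau of `μ` has at most 2 rows then every type-1 Dyck partition
has at most one strip of length `> 1`, and there are no `P ≻ Q` in `Conf¹(λ,μ)` with
`|P| = |Q|`. -/
theorem two_rows_no_order (n i : ℕ) (hi1 : 1 ≤ i) (hi2 : i < n)
    (mu : Fin n → Bool) (hmu : mu ∈ pathSet n i)
    (hrows : (Finset.univ.filter fun k : Fin n =>
        mu k = true ∧ ∃ k' : Fin n, k' < k ∧ mu k' = false).card ≤ 2)
    (lam : Fin n → Bool) (hlam : lam ∈ pathSet n i) (hle : pathLE i lam mu) :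
    (∀ P ∈ Conf1 i lam mu, ∀ D ∈ P, ∀ D' ∈ P, 1 < D.card → 1 < D'.card → D = D') ∧
    ¬ ∃ P Q, P ∈ Conf1 i lam mu ∧ Q ∈ Conf1 i lam mu ∧ DPsucc P Q ∧ P.card = Q.card :=
  two_rows_no_order_general n i mu hmu hrows lam hlam
end
end
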